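/- (Untangling) For every generalized sorting network of size k on n channels there exists a standard sorting network of size k on n channels. -/
import Mathlib


/-- Applying a single comparator `c = (i, j)`: the minimum of the two values goes to
channel `i` and the maximum to channel `j`. -/
def applyComp {n : ℕ} {α : Type*} [LinearOrder α] (c : Fin n × Fin n) (x : Fin n → α) :
    Fin n → α :=
  fun k => if k = c.1 then min (x c.1) (x c.2)
    else if k = c.2 then max (x c.1) (x c.2)
    else x k

/-- Propagating an input vector through a comparator network (a list of comparators). -/
def runNet {n : ℕ} {α : Type*} [LinearOrder α] (C : List (Fin n × Fin n)) (x : Fin n → α) :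
    Fin n → α :=
  C.foldl (fun v c => applyComp c v) x

/-- A standard comparator network: every comparator `(i, j)` satisfies `i < j`. -/
def Standard {n : ℕ} (C : List (Fin n × Fin n)) : Prop :=
  ∀ c ∈ C, c.1 < c.2

/-- A sorting network: a standard comparator network sorting every Boolean input. -/
def IsSortingNet {n : ℕ} (C : List (Fin n × Fin n)) : Prop :=
  Standard C ∧ ∀ x : Fin n → Bool, Monotone (runNet C x)

/-- The set of outputs of a comparator network on Boolean inputs. -/
def outputs {n : ℕ} (C : List (Fin n × Fin n)) : Set (Fin n → Bool) :=
  Set.range (runNet C)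

/-- The action of a permutation of channels on a set of Boolean vectors. -/
def permSet {n : ℕ} (π : Equiv.Perm (Fin n)) (S : Set (Fin n → Bool)) :
    Set (Fin n → Bool) :=
  (fun x => x ∘ ⇑π.symm) '' S

/-- `Ca` subsumes `Cb`: some permutation maps `outputs Ca` into `outputs Cb`. -/
def Subsumes {n : ℕ} (Ca Cb : List (Fin n × Fin n)) : Prop :=
  ∃ π : Equiv.Perm (Fin n), permSet π (outputs Ca) ⊆ outputs Cb

/-- `sortSize n` is the least size of a sorting network on `n` channels. -/
noncomputable def sortSize (n : ℕ) : ℕ :=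
  sInf {k | ∃ C : List (Fin n × Fin n), IsSortingNet C ∧ C.length = k}

/-- Number of ones in a Boolean vector. -/
def ones {n : ℕ} (x : Fin n → Bool) : ℕ :=
  (Finset.univ.filter fun i => x i = true).card

/-- A (finite) complete set of filters on `n` channels. -/
def CompleteFilters (n : ℕ) (F : Finset (List (Fin n × Fin n))) : Prop :=
  (∃ C : List (Fin n × Fin n), IsSortingNet C ∧ C.length = sortSize n) ↔
    (∃ C ∈ F, ∃ C' : List (Fin n × Fin n),
      IsSortingNet (C ++ C') ∧ (C ++ C').length = sortSize n)

/-- `wSet C x k` is the set of positions `i` such that some output vector of `C`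
with exactly `k` ones has value `x` at position `i`. -/
def wSet {n : ℕ} (C : List (Fin n × Fin n)) (x : Bool) (k : ℕ) : Set (Fin n) :=
  {i | ∃ v ∈ outputs C, ones v = k ∧ v i = x}

-- auxiliary
def untangle {n : ℕ} : Equiv.Perm (Fin n) → List (Fin n × Fin n) → List (Fin n × Fin n)
  | _, [] => []
  | π, c :: C =>
    if π c.1 < π c.2 then (π c.1, π c.2) :: untangle π C
    else (π c.2, π c.1) :: untangle (Equiv.swap (π c.1) (π c.2) * π) C

def finPerm {n : ℕ} : Equiv.Perm (Fin n) → List (Fin n × Fin n) → Equiv.Perm (Fin n)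
  | π, [] => π
  | π, c :: C =>
    if π c.1 < π c.2 then finPerm π C
    else finPerm (Equiv.swap (π c.1) (π c.2) * π) C

lemma runNet_cons {n : ℕ} (c : Fin n × Fin n) (C : List (Fin n × Fin n)) (x : Fin n → Bool) :
    runNet (c :: C) x = runNet C (applyComp c x) := rfl

lemma untangle_length {n : ℕ} (C : List (Fin n × Fin n)) :
    ∀ π : Equiv.Perm (Fin n), (untangle π C).length = C.length := by
  induction C with
  | nil => intro π; simp [untangle]
  | cons c C ih =>
    intro π
    by_cases h : π c.1 < π c.2 <;> simp [untangle, h, ih]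

lemma untangle_standard {n : ℕ} (C : List (Fin n × Fin n)) (h : ∀ c ∈ C, c.1 ≠ c.2) :
    ∀ π : Equiv.Perm (Fin n), Standard (untangle π C) := by
  induction C with
  | nil => intro π; simp [untangle, Standard]
  | cons c C ih =>
    intro π
    have hc : π c.1 ≠ π c.2 := fun hh => h c (by simp) (π.injective hh)
    have ih' := ih (fun d hd => h d (List.mem_cons_of_mem _ hd))
    by_cases hlt : π c.1 < π c.2
    · intro d hd
      simp only [untangle, if_pos hlt, List.mem_cons] at hd
      rcases hd with rfl | hd
      · exact hlt
      · exact ih' π d hd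
    · intro d hd
      simp only [untangle, if_neg hlt, List.mem_cons] at hd
      rcases hd with rfl | hd
      · exact lt_of_le_of_ne (not_lt.mp hlt) (fun hh => hc hh.symm)
      · exact ih' _ d hd

lemma applyComp_perm {n : ℕ} (π : Equiv.Perm (Fin n)) (c : Fin n × Fin n) (x : Fin n → Bool) :
    applyComp (π c.1, π c.2) (x ∘ π.symm) = (applyComp c x) ∘ ⇑π.symm := by
  funext k
  simp only [applyComp, Function.comp_apply, Equiv.symm_apply_apply]
  by_cases h1 : k = π c.1
  · have : π.symm k = c.1 := by rw [h1]; simp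
    simp [h1, this]
  · have h1' : π.symm k ≠ c.1 := fun hh => h1 (by rw [← hh]; simp)
    by_cases h2 : k = π c.2
    · have : π.symm k = c.2 := by rw [h2]; simp
      simp [h1, h1', h2, this]
    · have h2' : π.symm k ≠ c.2 := fun hh => h2 (by rw [← hh]; simp)
      simp [h1, h1', h2, h2']

lemma applyComp_perm_swap {n : ℕ} (π : Equiv.Perm (Fin n)) (c : Fin n × Fin n)
    (hc : c.1 ≠ c.2) (x : Fin n → Bool) :
    applyComp (π c.2, π c.1) (x ∘ π.symm)
      = (applyComp c x) ∘ ⇑(Equiv.swap (π c.1) (π c.2) * π).symm := by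
  have hab : π c.1 ≠ π c.2 := fun hh => hc (π.injective hh)
  funext k
  have hs : (Equiv.swap (π c.1) (π c.2) * π).symm k
      = π.symm (Equiv.swap (π c.1) (π c.2) k) := by
    simp [Equiv.Perm.mul_def, Equiv.swap_apply_def]
  simp only [applyComp, Function.comp_apply, hs, Equiv.symm_apply_apply]
  rcases eq_or_ne k (π c.2) with hk | hk
  · subst hk
    simp [Equiv.swap_apply_right, min_comm, max_comm]
  · rcases eq_or_ne k (π c.1) with hk2 | hk2
    · subst hk2
      simp [Equiv.swap_apply_left, hab, hc.symm, hk, min_comm, max_comm]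
    · have hfix : Equiv.swap (π c.1) (π c.2) k = k := Equiv.swap_apply_of_ne_of_ne hk2 hk
      have h1' : π.symm k ≠ c.1 := fun hh => hk2 (by rw [← hh]; simp)
      have h2' : π.symm k ≠ c.2 := fun hh => hk (by rw [← hh]; simp)
      simp [hk, hk2, hfix, h1', h2']

lemma run_untangle {n : ℕ} (C : List (Fin n × Fin n)) :
    ∀ (π : Equiv.Perm (Fin n)) (x : Fin n → Bool), (∀ c ∈ C, c.1 ≠ c.2) →
      runNet (untangle π C) (x ∘ π.symm) = (runNet C x) ∘ ⇑(finPerm π C).symm := by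
  induction C with
  | nil => intro π x _; simp [untangle, finPerm, runNet]
  | cons c C ih =>
    intro π x h
    have hc : c.1 ≠ c.2 := h c (by simp)
    have h' : ∀ d ∈ C, d.1 ≠ d.2 := fun d hd => h d (List.mem_cons_of_mem _ hd)
    by_cases hlt : π c.1 < π c.2
    · simp only [untangle, finPerm, if_pos hlt, runNet_cons]
      rw [applyComp_perm π c x, ih π (applyComp c x) h']
    · simp only [untangle, finPerm, if_neg hlt, runNet_cons]
      rw [applyComp_perm_swap π c hc x, ih _ (applyComp c x) h']

lemma runNet_std_fix {n : ℕ} (C : List (Fin n × Fin n)) :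
    ∀ x : Fin n → Bool, Standard C → Monotone x → runNet C x = x := by
  induction C with
  | nil => intro x _ _; rfl
  | cons c C ih =>
    intro x hstd hx
    have hc : c.1 < c.2 := hstd c (by simp)
    have hfix : applyComp c x = x := by
      funext k
      simp only [applyComp]
      have hle : x c.1 ≤ x c.2 := hx hc.le
      by_cases h1 : k = c.1
      · simp [h1, min_eq_left hle]
      · by_cases h2 : k = c.2
        · simp [h1, h2, max_eq_right hle, hc.ne']
        · simp [h1, h2]
    rw [runNet_cons, hfix]
    exact ih x (fun d hd => hstd d (List.mem_cons_of_mem _ hd)) hx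

lemma ones_applyComp {n : ℕ} (c : Fin n × Fin n) (hc : c.1 ≠ c.2) (x : Fin n → Bool) :
    ones (applyComp c x) = ones x := by
  classical
  have key : ∀ z : Fin n → Bool,
      ones z = (if z c.1 then 1 else 0) + ((if z c.2 then 1 else 0)
        + ∑ k ∈ (Finset.univ.erase c.1).erase c.2, (if z k then 1 else 0)) := by
    intro z
    rw [ones, Finset.card_filter]
    rw [← Finset.add_sum_erase _ _ (Finset.mem_univ c.1)]
    rw [← Finset.add_sum_erase _ _ (Finset.mem_erase.mpr ⟨hc.symm, Finset.mem_univ c.2⟩)]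
  rw [key (applyComp c x), key x]
  have e1 : applyComp c x c.1 = min (x c.1) (x c.2) := by simp [applyComp]
  have e2 : applyComp c x c.2 = max (x c.1) (x c.2) := by simp [applyComp, hc.symm]
  have e3 : ∀ k ∈ (Finset.univ.erase c.1).erase c.2, applyComp c x k = x k := by
    intro k hk
    simp only [Finset.mem_erase] at hk
    simp [applyComp, hk.1, hk.2.1]
  rw [e1, e2, Finset.sum_congr rfl (fun k hk => by rw [e3 k hk])]
  cases h1 : x c.1 <;> cases h2 : x c.2 <;> simp [min, max, h1, h2]

lemma ones_runNet {n : ℕ} (C : List (Fin n × Fin n)) :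
    ∀ x : Fin n → Bool, (∀ c ∈ C, c.1 ≠ c.2) → ones (runNet C x) = ones x := by
  induction C with
  | nil => intro x _; rfl
  | cons c C ih =>
    intro x h
    rw [runNet_cons, ih _ (fun d hd => h d (List.mem_cons_of_mem _ hd)),
      ones_applyComp c (h c (by simp)) x]

lemma ones_lt_of_mono {n : ℕ} {x y : Fin n → Bool} (hx : Monotone x) (hy : Monotone y)
    {i : Fin n} (hxi : x i = true) (hyi : y i = false) : ones y < ones x := by
  classical
  have hsub : Finset.univ.filter (fun j => y j = true) ⊆ Finset.Ioi i := by
    intro j hj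
    simp only [Finset.mem_filter] at hj
    simp only [Finset.mem_Ioi]
    by_contra hle
    have : y j ≤ y i := hy (not_lt.mp hle)
    rw [hj.2, hyi] at this
    exact absurd this (by simp)
  have hsup : Finset.Ici i ⊆ Finset.univ.filter (fun j => x j = true) := by
    intro j hj
    simp only [Finset.mem_Ici] at hj
    have : x i ≤ x j := hx hj
    rw [hxi] at this
    simp only [Finset.mem_filter, Finset.mem_univ, true_and]
    cases h : x j
    · rw [h] at this; exact absurd this (by simp)
    · rfl
  have hlt : (Finset.Ioi i).card < (Finset.Ici i).card := by
    apply Finset.card_lt_card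
    constructor
    · intro j hj; simp only [Finset.mem_Ioi] at hj; simp [Finset.mem_Ici, hj.le]
    · intro hcon
      have := hcon (Finset.mem_Ici.mpr le_rfl)
      simp at this
  calc ones y ≤ (Finset.Ioi i).card := Finset.card_le_card hsub
    _ < (Finset.Ici i).card := hlt
    _ ≤ ones x := Finset.card_le_card hsup

lemma mono_eq_of_ones_eq {n : ℕ} {x y : Fin n → Bool} (hx : Monotone x) (hy : Monotone y)
    (h : ones x = ones y) : x = y := by
  funext i
  by_contra hne
  cases hxi : x i <;> cases hyi : y i
  · rw [hxi, hyi] at hne; exact hne rfl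
  · exact absurd h (ne_of_lt (ones_lt_of_mono hy hx hyi hxi))
  · exact absurd h (ne_of_gt (ones_lt_of_mono hx hy hxi hyi))
  · rw [hxi, hyi] at hne; exact hne rfl


/-- Untangling: for every generalized sorting network of size `k` on `n` channels there
exists a standard sorting network of size `k` on `n` channels. -/
theorem untangling (n k : ℕ) (G : List (Fin n × Fin n))
    (hgen : ∀ c ∈ G, c.1 ≠ c.2)
    (hsorts : ∀ x : Fin n → Bool, Monotone (runNet G x))
    (hlen : G.length = k) :
    ∃ C : List (Fin n × Fin n), IsSortingNet C ∧ C.length = k := by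
  refine ⟨untangle 1 G, ⟨untangle_standard G hgen 1, ?_⟩, by rw [untangle_length G 1, hlen]⟩
  have hstd := untangle_standard G hgen 1
  have key : ∀ y : Fin n → Bool,
      runNet (untangle 1 G) y = (runNet G y) ∘ ⇑(finPerm 1 G).symm := by
    intro y
    have := run_untangle G 1 y hgen
    have hy : y ∘ ⇑(1 : Equiv.Perm (Fin n)).symm = y := by
      funext i; rfl
    rwa [hy] at this
  intro x
  set f := runNet G x with hf
  have hfm : Monotone f := hsorts x
  have hGf : runNet G f = f :=
    mono_eq_of_ones_eq (hsorts f) hfm (ones_runNet G f hgen)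
  have hSf : runNet (untangle 1 G) f = f := runNet_std_fix _ f hstd hfm
  have hfix : f ∘ ⇑(finPerm 1 G).symm = f := by
    rw [← hGf, ← key f, hSf, hGf]
  rw [key x, ← hf, hfix]
  exact hfm
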